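/- arXiv:1508.01511 — 4 statements merged into one kernel-verified Lean document; each statement's English description precedes it below -/
import Mathlib

section
/- For all β, λ, y ∈ ℂ and every integer m ≥ 1, the polynomials s^(−)_m satisfy the three-step recurrence s^(−)_m(y) = (y + 2m(λ+m) + (β/2)(λ−β/2−1))·s^(−)_{m−1}(y) − (m−1)(λ+m)(λ−β/2+m−1)(β/2+m)·s^(−)_{m−2}(y), where for m = 1 the term s^(−)_{−1} is taken to be 0 (its scalar coefficient (m−1)(λ+m)(λ−β/2+m−1)(β/2+m) vanishes for m = 1). -/
/-!
With `a = β/2 - λ` and `b = -β/2 - 1` the coefficient of `R_k(y;0)` in `s^(-)_m(y)` is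
`c_m(k) = C(m,k) (a-m)_{m-k} (b-m)_{m-k}`. Since `y R_k = R_{k+1} + k(k+1) R_k`, the three-term
recurrence is equivalent to a recurrence for these coefficients. After multiplication by `m+1-k`
that recurrence is a linear combination of the two contiguous relations
`(m+1-k) c_{m+1}(k) = (m+1)(a-m-1)(b-m-1) c_m(k)` and `(m-k) c_m(k) = (k+1)(a-k-1)(b-k-1) c_m(k+1)`,
which hold for all `k`, the truncated binomial coefficients included.
-/

open Finset

/-- Ascending Pochhammer symbol `(a)_k = ∏_{i=0}^{k-1} (a+i)`. -/
noncomputable def poch (a : ℂ) (k : ℕ) : ℂ := ∏ i ∈ Finset.range k, (a + i)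

/-- `R_k(y;α) = ∏_{l=1}^{k} (y - (α-l)(α-l+1))`. -/
noncomputable def Rpoly (y α : ℂ) (k : ℕ) : ℂ :=
  ∏ l ∈ Finset.range k, (y - (α - (l + 1)) * (α - (l + 1) + 1))

/-- `R^(1)_k(y) = ∑_{j=1}^{k} (β/2-k+j+1)_{2(k-j)} (y - (β/2)(β/2+1)) R_{j-1}(y;k)`. -/
noncomputable def R1 (β y : ℂ) (k : ℕ) : ℂ :=
  ∑ j ∈ Finset.Icc 1 k,
    poch (β/2 - k + j + 1) (2*(k - j)) * (y - β/2*(β/2+1)) * Rpoly y k (j-1)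

/-- `s^(-)_m(y)`. -/
noncomputable def sminus (β lam y : ℂ) (m : ℕ) : ℂ :=
  ∑ k ∈ Finset.range (m+1),
    (m.choose k : ℂ) * poch (β/2 - lam - m) (m-k) * poch (-β/2 - m - 1) (m-k) * Rpoly y 0 k

/-- `s^(+)_m(y)`. -/
noncomputable def splus (β lam y : ℂ) (m : ℕ) : ℂ :=
  ∑ k ∈ Finset.range (m+1),
    (m.choose k : ℂ) * poch (β/2 - lam - m) (m-k) * poch (-β/2 - m + 1) (m-k) * Rpoly y 0 k

/-- Coefficients `D^(1)_k(m)`. -/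
noncomputable def D1 (β lam : ℂ) (m k : ℕ) : ℂ :=
  if k = m then lam - β + 2*m
  else (m.choose k : ℂ) * poch (lam - β/2 + k + 1) (m-k) * poch (β/2 + k + 1) (m-k-1) *
    ((k:ℂ)*(lam+β+2*m) + β/2*(lam-β-2*m))

/-- `s^(1)_m(y) = ∑_{k=0}^m D^(1)_k(m) R^(1)_k(y)`. -/
noncomputable def s1 (β lam y : ℂ) (m : ℕ) : ℂ :=
  ∑ k ∈ Finset.range (m+1), D1 β lam m k * R1 β y k

theorem sum_range_eq_three_term {α : Type*} [CommRing α] {R μ c₀ c₁ c₂ : ℕ → α} {y A B : α}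
    {N : ℕ} (hR : ∀ k, y * R k = R (k + 1) + μ k * R k)
    (h₀ : c₂ 0 = (μ 0 + A) * c₁ 0 - B * c₀ 0)
    (hsucc : ∀ k, c₂ (k + 1) = c₁ k + (μ (k + 1) + A) * c₁ (k + 1) - B * c₀ (k + 1))
    (hN : c₁ N = 0) :
    ∑ k ∈ range (N + 1), c₂ k * R k =
      (y + A) * ∑ k ∈ range (N + 1), c₁ k * R k - B * ∑ k ∈ range (N + 1), c₀ k * R k := by
  set g : ℕ → α := fun k => ((μ k + A) * c₁ k - B * c₀ k) * R k
  calc ∑ k ∈ range (N + 1), c₂ k * R k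
      = ∑ k ∈ range N, (c₁ k * R (k + 1) + g (k + 1)) + g 0 := by
        rw [sum_range_succ', h₀]
        congr 1
        refine sum_congr rfl fun k _ => ?_
        rw [hsucc]
        ring
    _ = ∑ k ∈ range (N + 1), (c₁ k * R (k + 1) + g k) := by
        rw [sum_add_distrib, add_assoc, ← sum_range_succ' g, sum_add_distrib,
          sum_range_succ (fun k => c₁ k * R (k + 1)) N, hN, zero_mul, add_zero]
    _ = _ := by
        rw [mul_sum, mul_sum, ← sum_sub_distrib]
        refine sum_congr rfl fun k _ => ?_
        linear_combination -c₁ k * hR k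

theorem poch_succ (x : ℂ) (n : ℕ) : poch x (n + 1) = poch x n * (x + n) :=
  prod_range_succ _ _

theorem poch_succ' (x : ℂ) (n : ℕ) : poch x (n + 1) = x * poch (x + 1) n := by
  rw [poch, prod_range_succ', poch, mul_comm]
  push_cast
  rw [add_zero]
  exact congrArg _ (prod_congr rfl fun i _ => by ring)

theorem Rpoly_zero_succ (y : ℂ) (k : ℕ) :
    y * Rpoly y 0 k = Rpoly y 0 (k + 1) + (k * (k + 1)) * Rpoly y 0 k := by
  rw [Rpoly, Rpoly, prod_range_succ]
  ring

namespace Sminus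

variable (a b : ℂ)

noncomputable def coeff (m k : ℕ) : ℂ := m.choose k * poch (a - m) (m - k) * poch (b - m) (m - k)

theorem coeff_eq_zero_of_lt {m k : ℕ} (h : m < k) : coeff a b m k = 0 := by
  simp [coeff, Nat.choose_eq_zero_of_lt h]

theorem coeff_self (m : ℕ) : coeff a b m m = 1 := by
  simp [coeff, poch]

theorem coeff_succ_left (m k : ℕ) :
    ((m : ℂ) + 1 - k) * coeff a b (m + 1) k =
      (m + 1) * ((a - (m + 1)) * (b - (m + 1))) * coeff a b m k := by
  rcases le_or_gt k m with hk | hk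
  · obtain ⟨j, rfl⟩ := Nat.exists_eq_add_of_le hk
    have hchoose : ((j : ℂ) + 1) * (k + j + 1).choose k = (k + j + 1) * (k + j).choose k := by
      have := Nat.choose_mul_succ_eq (k + j) k
      rw [show k + j + 1 - k = j + 1 by omega] at this
      push_cast [mul_comm] at this ⊢
      exact_mod_cast this.symm
    have shift : ∀ x : ℂ, x - ((k + j + 1 : ℕ) : ℂ) + 1 = x - ((k + j : ℕ) : ℂ) := fun x => by
      push_cast
      ring
    simp only [coeff, show k + j + 1 - k = j + 1 by omega, show k + j - k = j by omega, poch_succ',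
      shift]
    push_cast
    linear_combination (a - (k + j + 1)) * (b - (k + j + 1)) * poch (a - (k + j)) j *
      poch (b - (k + j)) j * hchoose
  · rw [coeff_eq_zero_of_lt a b hk, mul_zero]
    rcases (Nat.succ_le_of_lt hk).eq_or_lt with rfl | hk'
    · push_cast
      ring
    · rw [coeff_eq_zero_of_lt a b hk', mul_zero]

theorem coeff_succ_right (m k : ℕ) :
    ((m : ℂ) - k) * coeff a b m k =
      (k + 1) * ((a - (k + 1)) * (b - (k + 1))) * coeff a b m (k + 1) := by
  rcases lt_or_ge k m with hk | hk
  · obtain ⟨j, rfl⟩ := Nat.exists_eq_add_of_lt hk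
    have hchoose : ((k : ℂ) + 1) * (k + j + 1).choose (k + 1) = (j + 1) * (k + j + 1).choose k := by
      have := Nat.choose_succ_right_eq (k + j + 1) k
      rw [show k + j + 1 - k = j + 1 by omega] at this
      push_cast [mul_comm] at this ⊢
      exact_mod_cast this
    simp only [coeff, show k + j + 1 - k = j + 1 by omega, show k + j + 1 - (k + 1) = j by omega,
      poch_succ]
    push_cast
    linear_combination -(a - (k + 1)) * (b - (k + 1)) * poch (a - (k + j + 1)) j *
      poch (b - (k + j + 1)) j * hchoose
  · rw [coeff_eq_zero_of_lt a b (Nat.lt_succ_of_le hk), mul_zero]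
    rcases hk.eq_or_lt with rfl | hk'
    · ring
    · rw [coeff_eq_zero_of_lt a b hk', mul_zero]

theorem coeff_succ_succ_zero (m : ℕ) :
    coeff a b (m + 2) 0 =
      (2 * (m + 2) * (m + 1 - a - b) + (a + 1) * (b + 1)) * coeff a b (m + 1) 0
        - (m + 1) * (m + 1 - a - b) * (m + 1 - a) * (m + 1 - b) * coeff a b m 0 := by
  have e₁ := coeff_succ_left a b (m + 1) 0
  have e₀ := coeff_succ_left a b m 0
  push_cast at e₁ e₀
  have hne : ((m : ℂ) + 1) * ((m : ℂ) + 2) ≠ 0 := by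
    exact_mod_cast (by positivity : (m + 1) * (m + 2) ≠ 0)
  apply mul_left_cancel₀ hne
  linear_combination (m + 1) * e₁ - (m + 2) * (m + 1) * (m + 1 - a - b) * e₀

theorem coeff_succ_succ_succ (m k : ℕ) :
    coeff a b (m + 2) (k + 1) =
      coeff a b (m + 1) k
        + ((k + 1) * (k + 2) + (2 * (m + 2) * (m + 1 - a - b) + (a + 1) * (b + 1)))
          * coeff a b (m + 1) (k + 1)
        - (m + 1) * (m + 1 - a - b) * (m + 1 - a) * (m + 1 - b) * coeff a b m (k + 1) := by
  rcases eq_or_ne k (m + 1) with rfl | hk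
  · rw [coeff_self, coeff_self, coeff_eq_zero_of_lt a b (Nat.lt_succ_self _),
      coeff_eq_zero_of_lt a b (by omega)]
    ring
  · have hne : ((m : ℂ) + 1 - k) ≠ 0 := by
      rw [sub_ne_zero]
      exact_mod_cast hk.symm
    apply mul_left_cancel₀ hne
    have e₂ := coeff_succ_left a b (m + 1) (k + 1)
    have e₁ := coeff_succ_right a b (m + 1) k
    have e₀ := coeff_succ_left a b m (k + 1)
    push_cast at e₂ e₁ e₀
    linear_combination e₂ - e₁ - (m + 1 - k) * (m + 1 - a - b) * e₀

end Sminus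

open Sminus

theorem sminus_eq_sum_coeff {β lam y : ℂ} {m N : ℕ} (h : m + 1 ≤ N) :
    sminus β lam y m = ∑ k ∈ range N, coeff (β / 2 - lam) (-β / 2 - 1) m k * Rpoly y 0 k := by
  rw [sminus, ← sum_subset (range_subset_range.2 h)]
  · refine sum_congr rfl fun k _ => ?_
    rw [coeff, sub_right_comm (-β / 2)]
  · intro k _ hk
    rw [coeff_eq_zero_of_lt _ _ (by simpa using hk), zero_mul]

/-- three-step recurrence for `s^(-)_m`, m ≥ 1. For m = 1 the natural-number
index `m-2` equals 0, but its scalar coefficient `(m-1)(λ+m)(λ-β/2+m-1)(β/2+m)` vanishes. -/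
theorem sminus_recurrence (β lam y : ℂ) (m : ℕ) (hm : 1 ≤ m) :
    sminus β lam y m =
      (y + 2*(m:ℂ)*(lam + m) + β/2*(lam - β/2 - 1)) * sminus β lam y (m-1)
      - ((m:ℂ) - 1)*(lam + m)*(lam - β/2 + m - 1)*(β/2 + m) * sminus β lam y (m-2) := by
  obtain ⟨n, rfl⟩ := Nat.exists_eq_add_of_le' hm
  rcases n with _ | n
  · simp [sminus, poch, Rpoly, sum_range_succ]
    ring
  · have key := sum_range_eq_three_term (R := Rpoly y 0) (μ := fun k => (k : ℂ) * (k + 1))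
      (Rpoly_zero_succ y) (by simpa using coeff_succ_succ_zero _ _ n)
      (fun k => by rw [coeff_succ_succ_succ]; push_cast; ring)
      (coeff_eq_zero_of_lt (β / 2 - lam) (-β / 2 - 1) (Nat.lt_succ_self (n + 1)))
    rw [show n + 1 + 1 - 1 = n + 1 from rfl, show n + 1 + 1 - 2 = n from rfl,
      sminus_eq_sum_coeff (m := n + 2) (N := n + 3) le_rfl,
      sminus_eq_sum_coeff (m := n + 1) (N := n + 3) (by omega),
      sminus_eq_sum_coeff (m := n) (N := n + 3) (by omega)]
    push_cast
    linear_combination key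
end

section
/- For all β, y ∈ ℂ and every m ∈ ℕ, the polynomials R^(1)_m satisfy the recurrence R^(1)_{m+1}(y) = (y − m(m+1))·R^(1)_m(y) + (β/2−m+1)_{2m}·(y − (β/2)(β/2+1)). -/
open Finset

/-!
Shifting `α` by one peels the first factor off `R_{j}(y;α+1)`: `R_{j}(y;α+1) = (y - α(α+1)) R_{j-1}(y;α)`.
Hence every term of `R^(1)_{m+1}` except the one with `j = 1` is `(y - m(m+1))` times the
corresponding term of `R^(1)_m`, and the term `j = 1` is `(β/2-m+1)_{2m} (y - (β/2)(β/2+1))`.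
-/

lemma Rpoly_zero (y α : ℂ) : Rpoly y α 0 = 1 := by
  simp [Rpoly]

lemma Rpoly_add_one_succ (y α : ℂ) (k : ℕ) :
    Rpoly y (α + 1) (k + 1) = (y - α * (α + 1)) * Rpoly y α k := by
  unfold Rpoly
  rw [prod_range_succ', mul_comm]
  congr 1
  · push_cast; ring
  · exact prod_congr rfl fun l _ => by push_cast; ring

lemma R1_eq_sum_range (β y : ℂ) (k : ℕ) :
    R1 β y k = ∑ i ∈ range k,
      poch (β/2 - k + i + 2) (2*(k - 1 - i)) * (y - β/2*(β/2+1)) * Rpoly y k i := by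
  rw [R1, ← Ico_add_one_right_eq_Icc, sum_Ico_eq_sum_range, Nat.add_sub_cancel]
  refine sum_congr rfl fun i _ => ?_
  rw [Nat.add_sub_cancel_left, Nat.sub_add_eq, Nat.sub_sub, add_comm 1 i]
  push_cast
  ring_nf

/-- recurrence for `R^(1)_m`. -/
theorem R1_recurrence (β y : ℂ) (m : ℕ) :
    R1 β y (m+1) = (y - (m:ℂ)*((m:ℂ)+1)) * R1 β y m
      + poch (β/2 - (m:ℂ) + 1) (2*m) * (y - β/2*(β/2+1)) := by
  rw [R1_eq_sum_range, R1_eq_sum_range, sum_range_succ', mul_sum, Rpoly_zero]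
  congr 1
  · refine sum_congr rfl fun i _ => ?_
    rw [show m + 1 - 1 - (i + 1) = m - 1 - i by omega, Nat.cast_succ, Rpoly_add_one_succ]
    push_cast
    ring_nf
  · rw [Nat.add_sub_cancel, Nat.sub_zero]
    push_cast
    ring_nf
end

section
/- For all y, α ∈ ℂ and every k ∈ ℕ, one has R_k(y(y+1); α) = (−1)^k · (−y−α)_k · (y+1−α)_k. -/
open Finset

/-- `R_k(y(y+1);α) = (-1)^k (-y-α)_k (y+1-α)_k`. -/
theorem Rpoly_eval_poch (y α : ℂ) (k : ℕ) :
    Rpoly (y*(y+1)) α k = (-1)^k * poch (-y - α) k * poch (y + 1 - α) k := by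
  induction k with
  | zero => simp [Rpoly, poch]
  | succ n ih =>
    simp only [Rpoly, poch, Finset.prod_range_succ] at *
    rw [ih]; ring
end

section
/- Let β, λ, y ∈ ℂ and let m ≥ 1 be an integer. Assume λ+β+2m ≠ 0 and set γ := β(λ−β−2m)/(2(λ+β+2m)). Assume moreover that γ+l ≠ 0, β/2+1+l ≠ 0 and λ−β/2+1+l ≠ 0 for every integer l with 0 ≤ l ≤ m−1. Then s^(1)_m(y(y+1)) = (λ−β/2+1)_m (β/2)_m · [ (λ−β−2m) · ∑_{l=0}^{m} ((1+γ)_l (−m)_l (−y)_l (1+y)_l)/((γ)_l (β/2+1)_l (λ−β/2+1)_l · l!) − (λ−β) · ∑_{l=0}^{m} ((−m)_l (−β/2+1)_l)/((λ−β/2+1)_l · l!) ]. -/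
open Finset

lemma poch_zero (a : ℂ) : poch a 0 = 1 := by simp [poch]

lemma poch_succ_right (a : ℂ) (n : ℕ) : poch a (n+1) = poch a n * (a + n) := by
  simp [poch, Finset.prod_range_succ]

lemma poch_succ_left (a : ℂ) (n : ℕ) : poch a (n+1) = a * poch (a+1) n := by
  rw [poch, Finset.prod_range_succ']
  rw [Nat.cast_zero, add_zero, mul_comm]
  congr 1
  exact Finset.prod_congr rfl fun i _ => by push_cast; ring

lemma poch_add (a : ℂ) (n p : ℕ) : poch a (n + p) = poch a n * poch (a + n) p := by
  rw [poch, Finset.prod_range_add]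
  congr 1
  exact Finset.prod_congr rfl fun i _ => by push_cast; ring

lemma poch_ne_zero (a : ℂ) (n : ℕ) (h : ∀ i : ℕ, i < n → a + i ≠ 0) : poch a n ≠ 0 := by
  rw [poch]
  exact Finset.prod_ne_zero_iff.mpr fun i hi => h i (Finset.mem_range.mp hi)

lemma poch_reflect (a : ℂ) (n : ℕ) : poch (a - n + 1) n = (-1)^n * poch (-a) n := by
  rw [poch, poch, ← Finset.prod_range_reflect (fun j => a - n + 1 + j) n,
    show ((-1:ℂ))^n = ∏ _j ∈ Finset.range n, (-1:ℂ) by simp, ← Finset.prod_mul_distrib]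
  refine Finset.prod_congr rfl fun j hj => ?_
  have hj' := Finset.mem_range.mp hj
  have : ((n - 1 - j : ℕ) : ℂ) = (n:ℂ) - 1 - j := by
    have h : n - 1 - j = n - (1 + j) := by omega
    rw [h, Nat.cast_sub (by omega)]
    push_cast; ring
  rw [this]; ring

lemma poch_factorial (m k : ℕ) (h : k ≤ m) :
    poch ((m:ℂ) - k + 1) k * ((m-k).factorial : ℂ) = (m.factorial : ℂ) := by
  induction k with
  | zero => simp [poch_zero]
  | succ k ih =>
    have hk : k ≤ m := by omega
    have h1 : (m:ℂ) - (k+1 : ℕ) + 1 = (m:ℂ) - k := by push_cast; ring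
    rw [h1, poch_succ_left, show (m:ℂ) - k + 1 = (m:ℂ) - (k:ℕ) + 1 by norm_num]
    have h2 : ((m - k).factorial : ℂ) = ((m:ℂ) - k) * ((m - (k+1)).factorial : ℂ) := by
      have : m - k = (m - (k+1)) + 1 := by omega
      rw [this, Nat.factorial_succ]
      push_cast [Nat.cast_sub (by omega : k + 1 ≤ m)]
      ring
    calc ((m:ℂ) - k) * poch ((m:ℂ) - (k:ℕ) + 1) k * ((m - (k+1)).factorial : ℂ)
        = poch ((m:ℂ) - (k:ℕ) + 1) k * (((m:ℂ) - k) * ((m - (k+1)).factorial : ℂ)) := by ring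
      _ = poch ((m:ℂ) - (k:ℕ) + 1) k * ((m-k).factorial : ℂ) := by rw [h2]
      _ = (m.factorial : ℂ) := ih hk

lemma poch_neg_nat (m k : ℕ) (h : k ≤ m) :
    poch (-(m:ℂ)) k = (-1)^k * (m.choose k : ℂ) * (k.factorial : ℂ) := by
  have hr := poch_reflect ((m:ℂ)) k
  have hf := poch_factorial m k h
  have hne : ((m-k).factorial : ℂ) ≠ 0 :=
    Nat.cast_ne_zero.mpr (Nat.factorial_ne_zero _)
  have hch : (m.choose k : ℂ) * (k.factorial : ℂ) * ((m-k).factorial : ℂ) = (m.factorial : ℂ) := by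
    exact_mod_cast congrArg (Nat.cast : ℕ → ℂ) (Nat.choose_mul_factorial_mul_factorial h)
  apply mul_right_cancel₀ hne
  calc poch (-(m:ℂ)) k * ((m-k).factorial : ℂ)
      = ((-1:ℂ))^k * (((-1:ℂ))^k * poch (-(m:ℂ)) k) * ((m-k).factorial : ℂ) := by
        rw [← mul_assoc, ← mul_pow]; norm_num
    _ = (-1)^k * (poch ((m:ℂ) - k + 1) k * ((m-k).factorial : ℂ)) := by rw [← hr]; ring
    _ = (-1)^k * (m.factorial : ℂ) := by rw [hf]
    _ = (-1)^k * (m.choose k : ℂ) * (k.factorial : ℂ) * ((m-k).factorial : ℂ) := by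
        rw [← hch]; ring

lemma pascal_sum (n : ℕ) (f : ℕ → ℂ) :
    ∑ k ∈ range (n+2), ((n+1).choose k : ℂ) * f k =
      ∑ k ∈ range (n+1), (n.choose k : ℂ) * f k
        + ∑ k ∈ range (n+1), (n.choose k : ℂ) * f (k+1) := by
  rw [Finset.sum_range_succ' (fun k => ((n+1).choose k : ℂ) * f k) (n+1)]
  have h1 : ∀ k, (((n+1).choose (k+1) : ℕ) : ℂ) = (n.choose k : ℂ) + (n.choose (k+1) : ℂ) := by
    intro k; rw [Nat.choose_succ_succ]; push_cast; ring
  simp only [h1, add_mul]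
  rw [Finset.sum_add_distrib]
  have h2 : ∑ k ∈ range (n+1), (n.choose (k+1) : ℂ) * f (k+1) + ((n+1).choose 0 : ℂ) * f 0
      = ∑ k ∈ range (n+1), (n.choose k : ℂ) * f k := by
    rw [show ((n+1).choose 0 : ℂ) = ((n.choose 0 : ℕ) : ℂ) by simp]
    rw [← Finset.sum_range_succ' (fun k => (n.choose k : ℂ) * f k) (n+1)]
    rw [Finset.sum_range_succ]
    simp [Nat.choose_succ_self]
  calc ∑ k ∈ range (n+1), (n.choose k : ℂ) * f (k+1)
        + ∑ k ∈ range (n+1), (n.choose (k+1) : ℂ) * f (k+1) + ((n+1).choose 0 : ℂ) * f 0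
      = ∑ k ∈ range (n+1), (n.choose k : ℂ) * f (k+1)
        + (∑ k ∈ range (n+1), (n.choose (k+1) : ℂ) * f (k+1) + ((n+1).choose 0 : ℂ) * f 0) := by
        ring
    _ = _ := by rw [h2]; ring

lemma CV : ∀ (m : ℕ) (b c : ℂ),
    ∑ k ∈ range (m+1), (m.choose k : ℂ) * (-1)^k * poch b k * poch (c + k) (m - k)
      = poch (c - b) m := by
  intro m
  induction m with
  | zero => intro b c; simp [poch_zero]
  | succ n ih =>
    intro b c
    have key : ∀ k ∈ range (n+1),
        ((n.choose k : ℂ) * ((-1)^k * poch b k * poch (c + k) (n + 1 - k)))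
          + ((n.choose k : ℂ) * ((-1)^(k+1) * poch b (k+1) * poch (c + (k+1:ℕ)) (n - k)))
        = (c - b) * ((n.choose k : ℂ) * (-1)^k * poch b k * poch ((c+1) + k) (n - k)) := by
      intro k hk
      have hk' := Finset.mem_range.mp hk
      have e1 : n + 1 - k = (n - k) + 1 := by omega
      have e2 : poch (c + k) ((n-k) + 1) = (c + k) * poch (c + 1 + k) (n - k) := by
        rw [poch_succ_left]; ring_nf
      have e3 : poch b (k+1) = poch b k * (b + k) := poch_succ_right b k
      have e4 : (c + ((k:ℕ)+1 : ℕ) : ℂ) = c + 1 + k := by push_cast; ring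
      rw [e1, e2, e3, e4]
      ring
    have hps := pascal_sum n (fun k => (-1)^k * poch b k * poch (c + k) (n + 1 - k))
    calc ∑ k ∈ range (n+1+1), ((n+1).choose k : ℂ) * (-1)^k * poch b k * poch (c + k) (n+1-k)
        = ∑ k ∈ range (n+2), ((n+1).choose k : ℂ) *
            ((-1)^k * poch b k * poch (c + k) (n + 1 - k)) := by
          refine Finset.sum_congr rfl fun k _ => by ring
      _ = ∑ k ∈ range (n+1), ((n.choose k : ℂ) * ((-1)^k * poch b k * poch (c + k) (n + 1 - k))
            + (n.choose k : ℂ) * ((-1)^(k+1) * poch b (k+1) * poch (c + (k+1:ℕ)) (n + 1 - (k+1)))) := by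
          rw [hps, ← Finset.sum_add_distrib]
      _ = ∑ k ∈ range (n+1), (c - b) * ((n.choose k : ℂ) * (-1)^k * poch b k * poch ((c+1) + k) (n - k)) := by
          refine Finset.sum_congr rfl fun k hk => ?_
          have := key k hk
          simpa using this
      _ = (c - b) * poch (c + 1 - b) n := by rw [← Finset.mul_sum, ih b (c+1)]
      _ = poch (c - b) (n+1) := by
          rw [poch_succ_left, show c - b + 1 = c + 1 - b by ring]

lemma CVk (m : ℕ) (b c : ℂ) :
    ∑ k ∈ range (m+1), (m.choose k : ℂ) * (-1)^k * (k:ℂ) * poch b k * poch (c + k) (m - k)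
      = -(m:ℂ) * b * poch (c - b) (m - 1) := by
  cases m with
  | zero => simp [poch_zero]
  | succ n =>
    rw [Finset.sum_range_succ' (fun k => ((n+1).choose k : ℂ) * (-1)^k * (k:ℂ) * poch b k * poch (c + k) (n+1 - k)) (n+1)]
    simp only [Nat.cast_zero, mul_zero, zero_mul, add_zero]
    have key : ∀ k ∈ range (n+1),
        (((n+1).choose (k+1) : ℂ) * (-1)^(k+1) * (((k+1:ℕ)):ℂ) * poch b (k+1) * poch (c + ((k+1:ℕ):ℂ)) (n+1 - (k+1)))
        = (-(↑n+1) * b) * ((n.choose k : ℂ) * (-1)^k * poch (b+1) k * poch ((c+1) + k) (n - k)) := by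
      intro k hk
      have hch : ((n+1).choose (k+1) : ℂ) * ((k:ℂ)+1) = ((n:ℂ)+1) * (n.choose k : ℂ) := by
        have h1 := Nat.add_one_mul_choose_eq n k
        have h2 := congrArg (Nat.cast : ℕ → ℂ) h1
        push_cast at h2
        linear_combination -h2
      have e3 : poch b (k+1) = b * poch (b+1) k := poch_succ_left b k
      have e4 : (c + ((k+1:ℕ):ℂ)) = (c + 1) + (k:ℂ) := by push_cast; ring
      have e5 : n + 1 - (k+1) = n - k := by omega
      rw [e3, e4, e5]
      push_cast
      calc ((n+1).choose (k+1) : ℂ) * (-1)^(k+1) * ((k:ℂ)+1) * (b * poch (b+1) k) * poch ((c+1) + k) (n - k)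
          = (((n+1).choose (k+1) : ℂ) * ((k:ℂ)+1)) * ((-1)^(k+1) * b * poch (b+1) k * poch ((c+1)+k) (n-k)) := by ring
        _ = (((n:ℂ)+1) * (n.choose k : ℂ)) * ((-1)^(k+1) * b * poch (b+1) k * poch ((c+1)+k) (n-k)) := by rw [hch]
        _ = (-(↑n+1) * b) * ((n.choose k : ℂ) * (-1)^k * poch (b+1) k * poch ((c+1) + k) (n - k)) := by ring
    rw [Finset.sum_congr rfl key, ← Finset.mul_sum, CV n (b+1) (c+1)]
    have : (c + 1) - (b + 1) = c - b := by ring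
    rw [this]
    push_cast
    ring_nf

lemma R1_eval (β y : ℂ) (k : ℕ) :
    R1 β (y*(y+1)) k = (-1)^k * poch (-y) k * poch (1+y) k - poch (β/2 - k + 1) (2*k) := by
  set G : ℕ → ℂ := fun i => poch (β/2 - ((k - i : ℕ) : ℂ) + 1) (2*(k - i)) *
    ∏ l ∈ range i, ((y - k + l + 1) * (y + k - l)) with hG
  have hterm : ∀ i : ℕ, i < k →
      poch (β/2 - k + ((i+1:ℕ):ℂ) + 1) (2*(k - (i+1))) * (y*(y+1) - β/2*(β/2+1)) *
        Rpoly (y*(y+1)) k i = G (i+1) - G i := by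
    intro i hi
    obtain ⟨s, hs⟩ : ∃ s, k = i + 1 + s := ⟨k - (i+1), by omega⟩
    have hR : Rpoly (y*(y+1)) k i = ∏ l ∈ range i, ((y - k + l + 1) * (y + k - l)) := by
      rw [Rpoly]
      exact Finset.prod_congr rfl fun l _ => by ring
    have e1 : k - (i+1) = s := by omega
    have e2 : k - i = s + 1 := by omega
    have e3 : ((k - (i+1) : ℕ) : ℂ) = (s : ℂ) := by rw [e1]
    have e4 : ((k - i : ℕ) : ℂ) = (s : ℂ) + 1 := by rw [e2]; push_cast; ring
    rw [hR, hG]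
    simp only [e1, e2, e3, e4]
    rw [Finset.prod_range_succ]
    have e5 : (β/2 - ((k:ℂ)) + ((i+1:ℕ):ℂ) + 1) = β/2 - s + 1 := by
      rw [hs]; push_cast; ring
    have e6 : (β/2 - ((s+1:ℕ):ℂ) + 1) = β/2 - (s:ℂ) := by push_cast; ring
    rw [e5, e6]
    have e7 : 2*(s+1) = (2*s + 1) + 1 := by ring
    have e8 : poch (β/2 - s) (2*(s+1)) =
        (β/2 - s) * poch (β/2 - s + 1) (2*s) * (β/2 + s + 1) := by
      rw [e7, poch_succ_right, poch_succ_left]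
      push_cast; ring_nf
    rw [e8]
    have e9 : (y - k + i + 1) * (y + k - i) = (y - s) * (y + s + 1) := by
      rw [hs]; push_cast; ring
    rw [e9]
    ring
  have hsum : R1 β (y*(y+1)) k = ∑ i ∈ range k, (G (i+1) - G i) := by
    rw [R1, ← Finset.Ico_add_one_right_eq_Icc, Finset.sum_Ico_eq_sum_range]
    simp only [Nat.add_sub_cancel_left, Nat.succ_sub_one]
    refine Finset.sum_congr rfl fun i hi => ?_
    have hi' := Finset.mem_range.mp hi
    have htm := hterm i hi'
    have e1 : ((1 + i : ℕ) : ℂ) = ((i+1:ℕ):ℂ) := by push_cast; ring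
    have e2 : k - (1 + i) = k - (i+1) := by omega
    rw [e1, e2]
    exact htm
  rw [hsum, Finset.sum_range_sub G]
  have hG0 : G 0 = poch (β/2 - k + 1) (2*k) := by
    simp [hG, poch]
  have hGk : G k = (-1)^k * poch (-y) k * poch (1+y) k := by
    rw [hG]
    simp only [Nat.sub_self, Nat.cast_zero, mul_zero]
    rw [poch_zero, one_mul]
    rw [← Finset.prod_range_reflect (fun l => (y - k + l + 1) * (y + k - l)) k]
    rw [show ((-1:ℂ))^k * poch (-y) k * poch (1+y) k
        = ∏ l ∈ range k, (((-1) * (-y + l)) * ((1+y) + l)) by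
      rw [Finset.prod_mul_distrib, Finset.prod_mul_distrib, Finset.prod_const,
        Finset.card_range, poch, poch]]
    refine Finset.prod_congr rfl fun l hl => ?_
    have hl' := Finset.mem_range.mp hl
    have : ((k - 1 - l : ℕ) : ℂ) = (k:ℂ) - 1 - l := by
      have h : k - 1 - l = k - (1 + l) := by omega
      rw [h, Nat.cast_sub (by omega)]
      push_cast; ring
    rw [this]
    ring
  rw [hG0, hGk]

lemma Acore (β lam : ℂ) (m k : ℕ) (hm : 1 ≤ m) (hkm : k ≤ m) :
    poch (lam - β/2 + 1) m * poch (β/2) m * (lam - β - 2*(m:ℂ)) *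
        (β*(lam - β - 2*(m:ℂ)) + (k:ℂ)*(2*(lam + β + 2*(m:ℂ)))) * (m.choose k : ℂ)
      = β*(lam - β - 2*(m:ℂ)) *
        (D1 β lam m k * poch (β/2+1) k * poch (lam - β/2 + 1) k) := by
  rcases eq_or_lt_of_le hkm with rfl | hlt
  · obtain ⟨n, rfl⟩ : ∃ n, k = n + 1 := ⟨k - 1, by omega⟩
    rw [D1, if_pos rfl]
    rw [show poch (β/2) (n+1) = β/2 * poch (β/2+1) n from poch_succ_left _ _,
        show poch (β/2+1) (n+1) = poch (β/2+1) n * (β/2+1+n) from poch_succ_right _ _,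
        Nat.choose_self]
    push_cast
    ring
  · obtain ⟨t, rfl⟩ : ∃ t, m = k + 1 + t := ⟨m - (k+1), by omega⟩
    rw [D1, if_neg (by omega)]
    simp only [show k + 1 + t - k - 1 = t from by omega, show t + 1 - 1 = t from by omega,
      show k + 1 + t - k = t + 1 from by omega, show k + 1 + t - 1 = k + t from by omega]
    rw [show poch (lam - β/2 + 1) (k+1+t) = poch (lam - β/2 + 1) (k + (t+1)) from by ring_nf,
        poch_add (lam - β/2 + 1) k (t+1)]
    rw [show poch (β/2) (k+1+t) = poch (β/2) ((k+t) + 1) from by ring_nf,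
        show poch (β/2) ((k+t)+1) = β/2 * poch (β/2+1) (k+t) from poch_succ_left _ _,
        poch_add (β/2+1) k t]
    rw [show lam - β/2 + (k:ℂ) + 1 = lam - β/2 + 1 + (k:ℕ) from by push_cast; ring]
    rw [show β/2 + (k:ℂ) + 1 = β/2 + 1 + (k:ℕ) from by push_cast; ring]
    push_cast
    ring

lemma Bcore (β lam : ℂ) (m k : ℕ) (hm : 1 ≤ m) (hkm : k ≤ m) :
    D1 β lam m k * poch (β/2 - (k:ℂ) + 1) (2*k)
      = poch (β/2+1) (m-1) * ((m.choose k : ℂ) * (-1)^k * poch (-(β/2)) k *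
          poch ((lam - β/2 + 1) + (k:ℂ)) (m-k) *
          ((k:ℂ)*(lam+β+2*(m:ℂ)) + β/2*(lam-β-2*(m:ℂ)))) := by
  have hrefl : poch (β/2 - (k:ℂ) + 1) k = (-1)^k * poch (-(β/2)) k := poch_reflect (β/2) k
  rcases eq_or_lt_of_le hkm with rfl | hlt
  · obtain ⟨n, rfl⟩ : ∃ n, k = n + 1 := ⟨k - 1, by omega⟩
    rw [D1, if_pos rfl, Nat.choose_self, Nat.sub_self, Nat.add_sub_cancel]
    rw [show 2*(n+1) = (n+1) + (n+1) from by ring,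
        poch_add (β/2 - ((n+1:ℕ):ℂ) + 1) (n+1) (n+1)]
    rw [show β/2 - ((n+1:ℕ):ℂ) + 1 + ((n+1:ℕ):ℂ) = β/2 + 1 from by push_cast; ring]
    rw [show poch (β/2+1) (n+1) = poch (β/2+1) n * (β/2+1+n) from poch_succ_right _ _]
    rw [hrefl, poch_zero]
    push_cast
    ring
  · obtain ⟨t, rfl⟩ : ∃ t, m = k + 1 + t := ⟨m - (k+1), by omega⟩
    rw [D1, if_neg (by omega)]
    simp only [show k + 1 + t - k - 1 = t from by omega, show t + 1 - 1 = t from by omega,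
      show k + 1 + t - k = t + 1 from by omega, show k + 1 + t - 1 = k + t from by omega]
    rw [show 2*k = k + k from by ring, poch_add (β/2 - (k:ℂ) + 1) k k]
    rw [show β/2 - (k:ℂ) + 1 + (k:ℕ) = β/2 + 1 from by push_cast; ring]
    rw [poch_add (β/2+1) k t]
    rw [show β/2 + (k:ℂ) + 1 = β/2 + 1 + (k:ℕ) from by push_cast; ring]
    rw [show lam - β/2 + (k:ℂ) + 1 = lam - β/2 + 1 + (k:ℂ) from by push_cast; ring]
    rw [hrefl]
    push_cast
    ring

/-- `s^(1)_m(y(y+1))` as a combination of a `₄F₃` and a `₂F₁` sum,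
with `γ = β(λ-β-2m)/(2(λ+β+2m))`. -/
theorem s1_hypergeom_4F3 (β lam y : ℂ) (m : ℕ) (hm : 1 ≤ m)
    (hden : lam + β + 2*(m:ℂ) ≠ 0)
    (hγ : ∀ l : ℕ, l < m → β*(lam - β - 2*(m:ℂ))/(2*(lam + β + 2*(m:ℂ))) + (l:ℂ) ≠ 0)
    (hb : ∀ l : ℕ, l < m → β/2 + 1 + (l:ℂ) ≠ 0)
    (hc : ∀ l : ℕ, l < m → lam - β/2 + 1 + (l:ℂ) ≠ 0) :
    s1 β lam (y*(y+1)) m =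
      poch (lam - β/2 + 1) m * poch (β/2) m *
        ((lam - β - 2*(m:ℂ)) *
            ∑ l ∈ Finset.range (m+1),
              (poch (1 + β*(lam - β - 2*(m:ℂ))/(2*(lam + β + 2*(m:ℂ)))) l *
                poch (-(m:ℂ)) l * poch (-y) l * poch (1+y) l) /
              (poch (β*(lam - β - 2*(m:ℂ))/(2*(lam + β + 2*(m:ℂ)))) l *
                poch (β/2 + 1) l * poch (lam - β/2 + 1) l * (Nat.factorial l : ℂ))
          - (lam - β) *
            ∑ l ∈ Finset.range (m+1),
              (poch (-(m:ℂ)) l * poch (-β/2 + 1) l) /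
                (poch (lam - β/2 + 1) l * (Nat.factorial l : ℂ))) := by
  have h2L : (2:ℂ)*(lam + β + 2*(m:ℂ)) ≠ 0 := mul_ne_zero two_ne_zero hden
  set g : ℂ := β*(lam - β - 2*(m:ℂ))/(2*(lam + β + 2*(m:ℂ))) with hgdef
  have hgrel : g * (2*(lam + β + 2*(m:ℂ))) = β*(lam - β - 2*(m:ℂ)) :=
    div_mul_cancel₀ _ h2L
  have hg0 : g ≠ 0 := by
    have h := hγ 0 hm
    simpa using h
  have hgk : ∀ k, k ≤ m → poch g k ≠ 0 := fun k hk =>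
    poch_ne_zero _ _ fun i hi => hγ i (by omega)
  have hbk : ∀ k, k ≤ m → poch (β/2+1) k ≠ 0 := fun k hk =>
    poch_ne_zero _ _ fun i hi => hb i (by omega)
  have hck : ∀ k, k ≤ m → poch (lam - β/2 + 1) k ≠ 0 := fun k hk =>
    poch_ne_zero _ _ fun i hi => hc i (by omega)
  -- Step 1: telescoped form of s1
  have hS1 : s1 β lam (y*(y+1)) m
      = (∑ k ∈ Finset.range (m+1), D1 β lam m k * ((-1)^k * poch (-y) k * poch (1+y) k))
        - ∑ k ∈ Finset.range (m+1), D1 β lam m k * poch (β/2 - (k:ℂ) + 1) (2*k) := by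
    rw [s1, ← Finset.sum_sub_distrib]
    refine Finset.sum_congr rfl fun k _ => ?_
    rw [R1_eval]
    ring
  -- Step 2: the 4F3 part, matched term by term
  have hGA : ∑ k ∈ Finset.range (m+1), D1 β lam m k * ((-1)^k * poch (-y) k * poch (1+y) k)
      = poch (lam - β/2 + 1) m * poch (β/2) m * (lam - β - 2*(m:ℂ)) *
          ∑ l ∈ Finset.range (m+1),
            (poch (1 + g) l * poch (-(m:ℂ)) l * poch (-y) l * poch (1+y) l) /
              (poch g l * poch (β/2 + 1) l * poch (lam - β/2 + 1) l * (Nat.factorial l : ℂ)) := by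
    rw [Finset.mul_sum]
    refine Finset.sum_congr rfl fun k hk => ?_
    have hkm : k ≤ m := by have := Finset.mem_range.mp hk; omega
    have hfac : (Nat.factorial k : ℂ) ≠ 0 := Nat.cast_ne_zero.mpr (Nat.factorial_ne_zero k)
    have hD : poch g k * poch (β/2+1) k * poch (lam - β/2+1) k * (Nat.factorial k : ℂ) ≠ 0 :=
      mul_ne_zero (mul_ne_zero (mul_ne_zero (hgk k hkm) (hbk k hkm)) (hck k hkm)) hfac
    have hpg : poch g k * (g + k) = g * poch (1+g) k := by
      rw [show (1:ℂ) + g = g + 1 from by ring, ← poch_succ_left, poch_succ_right]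
    have hA := Acore β lam m k hm hkm
    have key : poch (lam - β/2 + 1) m * poch (β/2) m * (lam - β - 2*(m:ℂ)) *
        (poch (1+g) k * poch (-(m:ℂ)) k)
        = D1 β lam m k * (-1)^k *
          (poch g k * poch (β/2+1) k * poch (lam - β/2+1) k * (Nat.factorial k : ℂ)) := by
      apply mul_left_cancel₀ (mul_ne_zero hg0 h2L)
      rw [poch_neg_nat m k hkm]
      calc (g * (2*(lam + β + 2*(m:ℂ)))) *
            (poch (lam - β/2 + 1) m * poch (β/2) m * (lam - β - 2*(m:ℂ)) *
              (poch (1+g) k * ((-1)^k * (m.choose k : ℂ) * (Nat.factorial k : ℂ))))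
          = (g * poch (1+g) k) * ((2*(lam + β + 2*(m:ℂ))) *
              (poch (lam - β/2 + 1) m * poch (β/2) m * (lam - β - 2*(m:ℂ)) *
                ((-1)^k * (m.choose k : ℂ) * (Nat.factorial k : ℂ)))) := by ring
        _ = (poch g k * (g + k)) * ((2*(lam + β + 2*(m:ℂ))) *
              (poch (lam - β/2 + 1) m * poch (β/2) m * (lam - β - 2*(m:ℂ)) *
                ((-1)^k * (m.choose k : ℂ) * (Nat.factorial k : ℂ)))) := by rw [hpg]
        _ = (g * (2*(lam + β + 2*(m:ℂ)))) *
              (poch g k * (poch (lam - β/2 + 1) m * poch (β/2) m * (lam - β - 2*(m:ℂ)) *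
                ((-1)^k * (m.choose k : ℂ) * (Nat.factorial k : ℂ))))
            + ((k:ℂ) * (2*(lam + β + 2*(m:ℂ)))) *
              (poch g k * (poch (lam - β/2 + 1) m * poch (β/2) m * (lam - β - 2*(m:ℂ)) *
                ((-1)^k * (m.choose k : ℂ) * (Nat.factorial k : ℂ)))) := by ring
        _ = (β*(lam - β - 2*(m:ℂ))) *
              (poch g k * (poch (lam - β/2 + 1) m * poch (β/2) m * (lam - β - 2*(m:ℂ)) *
                ((-1)^k * (m.choose k : ℂ) * (Nat.factorial k : ℂ))))
            + ((k:ℂ) * (2*(lam + β + 2*(m:ℂ)))) *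
              (poch g k * (poch (lam - β/2 + 1) m * poch (β/2) m * (lam - β - 2*(m:ℂ)) *
                ((-1)^k * (m.choose k : ℂ) * (Nat.factorial k : ℂ)))) := by rw [hgrel]
        _ = (poch (lam - β/2 + 1) m * poch (β/2) m * (lam - β - 2*(m:ℂ)) *
              (β*(lam - β - 2*(m:ℂ)) + (k:ℂ)*(2*(lam + β + 2*(m:ℂ)))) * (m.choose k : ℂ)) *
              (poch g k * ((-1)^k * (Nat.factorial k : ℂ))) := by ring
        _ = (β*(lam - β - 2*(m:ℂ)) *
              (D1 β lam m k * poch (β/2+1) k * poch (lam - β/2 + 1) k)) *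
              (poch g k * ((-1)^k * (Nat.factorial k : ℂ))) := by rw [hA]
        _ = (g * (2*(lam + β + 2*(m:ℂ)))) *
              (D1 β lam m k * (-1)^k *
                (poch g k * poch (β/2+1) k * poch (lam - β/2+1) k * (Nat.factorial k : ℂ))) := by
            rw [← hgrel]; ring
    calc D1 β lam m k * ((-1)^k * poch (-y) k * poch (1+y) k)
        = (D1 β lam m k * (-1)^k) * (poch (-y) k * poch (1+y) k) := by ring
      _ = ((poch (lam - β/2 + 1) m * poch (β/2) m * (lam - β - 2*(m:ℂ)) *
            (poch (1+g) k * poch (-(m:ℂ)) k)) /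
            (poch g k * poch (β/2+1) k * poch (lam - β/2+1) k * (Nat.factorial k : ℂ))) *
          (poch (-y) k * poch (1+y) k) := by
          rw [key, mul_div_cancel_right₀ _ hD]
      _ = poch (lam - β/2 + 1) m * poch (β/2) m * (lam - β - 2*(m:ℂ)) *
          ((poch (1 + g) k * poch (-(m:ℂ)) k * poch (-y) k * poch (1+y) k) /
            (poch g k * poch (β/2 + 1) k * poch (lam - β/2 + 1) k * (Nat.factorial k : ℂ))) := by
          ring
  -- Step 3: the 2F1 part via Chu–Vandermonde
  have hGB : ∑ k ∈ Finset.range (m+1), D1 β lam m k * poch (β/2 - (k:ℂ) + 1) (2*k)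
      = poch (lam - β/2 + 1) m * poch (β/2) m * (lam - β) *
          ∑ l ∈ Finset.range (m+1),
            (poch (-(m:ℂ)) l * poch (-β/2 + 1) l) /
              (poch (lam - β/2 + 1) l * (Nat.factorial l : ℂ)) := by
    have hL1 : ∑ k ∈ Finset.range (m+1), D1 β lam m k * poch (β/2 - (k:ℂ) + 1) (2*k)
        = poch (β/2+1) (m-1) *
            ((lam+β+2*(m:ℂ)) *
              ∑ k ∈ Finset.range (m+1), (m.choose k : ℂ) * (-1)^k * (k:ℂ) * poch (-(β/2)) k *
                poch ((lam - β/2 + 1) + (k:ℂ)) (m-k)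
             + β/2*(lam-β-2*(m:ℂ)) *
              ∑ k ∈ Finset.range (m+1), (m.choose k : ℂ) * (-1)^k * poch (-(β/2)) k *
                poch ((lam - β/2 + 1) + (k:ℂ)) (m-k)) := by
      rw [Finset.mul_sum, Finset.mul_sum, ← Finset.sum_add_distrib, Finset.mul_sum]
      refine Finset.sum_congr rfl fun k hk => ?_
      have hkm : k ≤ m := by have := Finset.mem_range.mp hk; omega
      rw [Bcore β lam m k hm hkm]
      ring
    have hcvk := CVk m (-(β/2)) (lam - β/2 + 1)
    have hcv0 := CV m (-(β/2)) (lam - β/2 + 1)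
    rw [show (lam - β/2 + 1) - (-(β/2)) = lam + 1 from by ring] at hcvk hcv0
    rw [hL1, hcvk, hcv0]
    have hR1 : poch (lam - β/2 + 1) m * poch (β/2) m * (lam - β) *
          ∑ l ∈ Finset.range (m+1),
            (poch (-(m:ℂ)) l * poch (-β/2 + 1) l) /
              (poch (lam - β/2 + 1) l * (Nat.factorial l : ℂ))
        = (lam - β) * poch (β/2) m *
            ∑ l ∈ Finset.range (m+1), (m.choose l : ℂ) * (-1)^l * poch (-β/2 + 1) l *
              poch ((lam - β/2 + 1) + (l:ℂ)) (m-l) := by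
      rw [Finset.mul_sum, Finset.mul_sum]
      refine Finset.sum_congr rfl fun l hl => ?_
      have hlm : l ≤ m := by have := Finset.mem_range.mp hl; omega
      have hfac : (Nat.factorial l : ℂ) ≠ 0 := Nat.cast_ne_zero.mpr (Nat.factorial_ne_zero l)
      have hDl : poch (lam - β/2 + 1) l * (Nat.factorial l : ℂ) ≠ 0 :=
        mul_ne_zero (hck l hlm) hfac
      have hcm : poch (lam - β/2 + 1) m
          = poch (lam - β/2 + 1) l * poch ((lam - β/2 + 1) + (l:ℂ)) (m-l) := by
        conv_lhs => rw [show m = l + (m-l) from by omega]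
        exact poch_add _ l (m-l)
      rw [hcm, poch_neg_nat m l hlm, ← mul_div_assoc, div_eq_iff hDl]
      ring
    rw [hR1]
    have hcv1 := CV m (-β/2 + 1) (lam - β/2 + 1)
    rw [show (lam - β/2 + 1) - (-β/2 + 1) = lam from by ring] at hcv1
    rw [hcv1]
    -- final closed-form identity
    obtain ⟨n, rfl⟩ : ∃ n, m = n + 1 := ⟨m - 1, by omega⟩
    simp only [Nat.add_sub_cancel]
    rw [show poch (β/2) (n+1) = β/2 * poch (β/2+1) n from poch_succ_left _ _,
        show poch lam (n+1) = lam * poch (lam+1) n from poch_succ_left _ _,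
        show poch (lam+1) (n+1) = poch (lam+1) n * (lam+1+n) from poch_succ_right _ _]
    push_cast
    ring
  rw [hS1, hGA, hGB]
  ring
end
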